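/- arXiv:2411.10243 — 2 statements merged into one kernel-verified Lean document; each statement's English description precedes it below -/
import Mathlib

section
/- Let A ∈ ℝ^{n×n}, B ∈ ℝ^{n×m}, G ∈ ℝ^{n×ℓ} and data matrices U, Φ, X₀ with X₁ = B·U + G·Φ + A·X₀, and suppose D = [U;Φ;X₀] has full row rank. Let H₁, H₂ satisfy D·H₁ = [K;0;I] and D·H₂ = [0;I;0]. Then for every x ∈ ℝ^n and φ ∈ ℝ^ℓ: (A + B·K)x + G·φ = X₁·(H₁ x + H₂ φ), and moreover U·H₁ = K. -/
open Matrix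

theorem stmt_13 (n m ℓ T : ℕ)
    (A : Matrix (Fin n) (Fin n) ℝ) (B : Matrix (Fin n) (Fin m) ℝ)
    (G : Matrix (Fin n) (Fin ℓ) ℝ) (K : Matrix (Fin m) (Fin n) ℝ)
    (U : Matrix (Fin m) (Fin T) ℝ) (Φ : Matrix (Fin ℓ) (Fin T) ℝ)
    (X₀ : Matrix (Fin n) (Fin T) ℝ)
    (X₁ : Matrix (Fin n) (Fin T) ℝ) (hX₁ : X₁ = B * U + G * Φ + A * X₀)
    (D : Matrix ((Fin m ⊕ Fin ℓ) ⊕ Fin n) (Fin T) ℝ)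
    (hD : D = Matrix.fromRows (Matrix.fromRows U Φ) X₀)
    (hrank : D.rank = m + ℓ + n)
    (H₁ : Matrix (Fin T) (Fin n) ℝ)
    (hH₁ : D * H₁ = Matrix.fromRows (Matrix.fromRows K 0) 1)
    (H₂ : Matrix (Fin T) (Fin ℓ) ℝ)
    (hH₂ : D * H₂ = Matrix.fromRows (Matrix.fromRows 0 1) 0) :
    (∀ (x : Fin n → ℝ) (φ : Fin ℓ → ℝ),
      (A + B * K).mulVec x + G.mulVec φ = X₁.mulVec (H₁.mulVec x + H₂.mulVec φ)) ∧
    U * H₁ = K := by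
  subst hD hX₁
  rw [Matrix.fromRows_mul, Matrix.fromRows_mul, Matrix.fromRows_inj.eq_iff,
    Matrix.fromRows_inj.eq_iff] at hH₁ hH₂
  obtain ⟨⟨hUH₁, hΦH₁⟩, hX₀H₁⟩ := hH₁
  obtain ⟨⟨hUH₂, hΦH₂⟩, hX₀H₂⟩ := hH₂
  refine ⟨fun x φ => ?_, hUH₁⟩
  rw [show ∀ (M : Matrix (Fin n) (Fin T) ℝ) v w, M.mulVec (Matrix.mulVec H₁ v + Matrix.mulVec H₂ w) = (M * H₁).mulVec v + (M * H₂).mulVec w from fun M v w => by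
    rw [Matrix.mulVec_add, Matrix.mulVec_mulVec, Matrix.mulVec_mulVec]]
  simp only [Matrix.add_mul, Matrix.mul_assoc, hUH₁, hΦH₁, hX₀H₁, hUH₂, hΦH₂, hX₀H₂,
    Matrix.mul_zero, Matrix.mul_one, Matrix.add_mulVec, Matrix.zero_mulVec,
    Matrix.mulVec_add, Matrix.mulVec_mulVec]
  abel
end

section
/- Let Z₁ ∈ ℝ^{n×n} and Z₃ ∈ ℝ^{ℓ×ℓ} symmetric, Z₂ ∈ ℝ^{n×ℓ}, W ∈ ℝ^{p×n}, and suppose the block matrix [[Z₁ + WᵀW, Z₂],[Z₂ᵀ, Z₃ − I]] is negative definite. Then for every x ∈ ℝ^n and every φ ∈ ℝ^ℓ with ‖φ‖ ≤ ‖Wx‖ and (x,φ) ≠ (0,0): xᵀZ₁x + 2xᵀZ₂φ + φᵀZ₃φ < 0. -/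
open Matrix

/-
The LMI says that the quadratic form of the block matrix is negative at `(x, φ) ≠ 0`. That form is
`xᵀZ₁x + 2xᵀZ₂φ + φᵀZ₃φ + (‖Wx‖² - ‖φ‖²)`, and the bracket is nonnegative under the sector bound
`‖φ‖ ≤ ‖Wx‖`, so the Lyapunov difference alone is already negative.
-/

namespace Matrix

variable {m o p R : Type*} [Fintype m] [Fintype o]

theorem sumElim_dotProduct_fromBlocks_transpose_mulVec_sumElim [CommSemiring R]
    (A : Matrix m m R) (B : Matrix m o R) (D : Matrix o o R) (x : m → R) (y : o → R) :
    Sum.elim x y ⬝ᵥ fromBlocks A B Bᵀ D *ᵥ Sum.elim x y =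
      x ⬝ᵥ A *ᵥ x + 2 * (x ⬝ᵥ B *ᵥ y) + y ⬝ᵥ D *ᵥ y := by
  rw [fromBlocks_mulVec, sumElim_dotProduct_sumElim, Sum.elim_comp_inl, Sum.elim_comp_inr,
    dotProduct_add, dotProduct_add, dotProduct_transpose_mulVec]
  ring

theorem dotProduct_transpose_mul_self_mulVec [Fintype p] [CommSemiring R]
    (W : Matrix p m R) (x : m → R) : x ⬝ᵥ (Wᵀ * W) *ᵥ x = W *ᵥ x ⬝ᵥ W *ᵥ x := by
  rw [← mulVec_mulVec, dotProduct_transpose_mulVec]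

theorem PosDef.dotProduct_mulVec_neg_of_neg [Ring R] [PartialOrder R] [IsOrderedAddMonoid R]
    [StarRing R] {M : Matrix m m R} (hM : (-M).PosDef) {x : m → R} (hx : x ≠ 0) :
    star x ⬝ᵥ M *ᵥ x < 0 := by
  simpa only [neg_mulVec, dotProduct_neg, neg_pos] using hM.dotProduct_mulVec_pos hx

end Matrix

theorem stmt_15_general (n ℓ p : ℕ)
    (Z₁ : Matrix (Fin n) (Fin n) ℝ)
    (Z₃ : Matrix (Fin ℓ) (Fin ℓ) ℝ)
    (Z₂ : Matrix (Fin n) (Fin ℓ) ℝ) (W : Matrix (Fin p) (Fin n) ℝ)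
    (hLMI : (-(Matrix.fromBlocks (Z₁ + Wᵀ * W) Z₂ Z₂ᵀ (Z₃ - 1))).PosDef) :
    ∀ (x : Fin n → ℝ) (φ : Fin ℓ → ℝ),
      Real.sqrt (φ ⬝ᵥ φ) ≤ Real.sqrt (W.mulVec x ⬝ᵥ W.mulVec x) →
      ¬(x = 0 ∧ φ = 0) →
      x ⬝ᵥ Z₁.mulVec x + 2 * (x ⬝ᵥ Z₂.mulVec φ) + φ ⬝ᵥ Z₃.mulVec φ < 0 := by
  intro x φ hsector hne
  have hz : Sum.elim x φ ≠ 0 := by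
    rwa [← Sum.elim_zero_zero, Ne, Sum.elim_eq_iff]
  have hblock := hLMI.dotProduct_mulVec_neg_of_neg hz
  rw [star_trivial, sumElim_dotProduct_fromBlocks_transpose_mulVec_sumElim, add_mulVec,
    dotProduct_add, dotProduct_transpose_mul_self_mulVec, sub_mulVec, dotProduct_sub,
    one_mulVec] at hblock
  have hsq : φ ⬝ᵥ φ ≤ W *ᵥ x ⬝ᵥ W *ᵥ x :=
    (Real.sqrt_le_sqrt_iff (dotProduct_self_star_nonneg (W *ᵥ x))).mp hsector
  linarith

theorem stmt_15 (n ℓ p : ℕ)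
    (Z₁ : Matrix (Fin n) (Fin n) ℝ) (hZ₁ : Z₁.IsSymm)
    (Z₃ : Matrix (Fin ℓ) (Fin ℓ) ℝ) (hZ₃ : Z₃.IsSymm)
    (Z₂ : Matrix (Fin n) (Fin ℓ) ℝ) (W : Matrix (Fin p) (Fin n) ℝ)
    (hLMI : (-(Matrix.fromBlocks (Z₁ + Wᵀ * W) Z₂ Z₂ᵀ (Z₃ - 1))).PosDef) :
    ∀ (x : Fin n → ℝ) (φ : Fin ℓ → ℝ),
      Real.sqrt (φ ⬝ᵥ φ) ≤ Real.sqrt (W.mulVec x ⬝ᵥ W.mulVec x) →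
      ¬(x = 0 ∧ φ = 0) →
      x ⬝ᵥ Z₁.mulVec x + 2 * (x ⬝ᵥ Z₂.mulVec φ) + φ ⬝ᵥ Z₃.mulVec φ < 0 :=
  stmt_15_general n ℓ p Z₁ Z₃ Z₂ W hLMI
end
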